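/- arXiv:0803.4466 — 9 statements merged into one kernel-verified Lean document; each statement's English description precedes it below -/
import Mathlib

section
/- In the presence of identity types, the rules of application (app with its β-rule), and a propositional η-rule with its computation rule (η(m) : Id(m, lam (fun x => app m x)) with η(lam f) = refl), the funsplit eliminator is definable: for any family C : ΠAB → Type and d : ∀ f : ∀ x, B x, C (lam f) and any m : ΠAB one obtains funsplit d m : C m satisfying funsplit d (lam f) = d f. -/
/-- In the presence of identity types, application with its β-rule,
Leibniz substitution, and a propositional η-rule with its computation rule,
the funsplit eliminator is definable, with its computation rule. -/
theorem app_eta_define_funsplit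
    (A : Type) (B : A → Type) (Pi : Type)
    (lam : (∀ x : A, B x) → Pi)
    (app : Pi → ∀ a : A, B a)
    (hbeta : ∀ (f : ∀ x : A, B x) (a : A), app (lam f) a = f a)
    (Id : Pi → Pi → Type)
    (refl : ∀ m : Pi, Id m m)
    (J : ∀ (C : ∀ a b : Pi, Id a b → Type),
      (∀ a : Pi, C a a (refl a)) → ∀ (a b : Pi) (p : Id a b), C a b p)
    (hJ : ∀ (C : ∀ a b : Pi, Id a b → Type) (d : ∀ a : Pi, C a a (refl a)) (a : Pi),
      J C d a a (refl a) = d a)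
    (subst : ∀ (P : Pi → Type) {a b : Pi}, Id a b → P b → P a)
    (hsubst : ∀ (P : Pi → Type) (a : Pi) (b : P a), subst P (refl a) b = b)
    (η : ∀ m : Pi, Id m (lam (fun x => app m x)))
    (hη : ∀ f : ∀ x : A, B x, HEq (η (lam f)) (refl (lam f))) :
    ∃ funsplit : ∀ (C : Pi → Type), (∀ f : ∀ x : A, B x, C (lam f)) → ∀ m : Pi, C m,
      ∀ (C : Pi → Type) (d : ∀ f : ∀ x : A, B x, C (lam f)) (f : ∀ x : A, B x),
        funsplit C d (lam f) = d f := by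
  refine ⟨fun C d m => subst C (η m) (d (fun x => app m x)), ?_⟩
  intro C d f
  have key : ∀ (g : ∀ x : A, B x), g = f → ∀ (p : Id (lam f) (lam g)),
      HEq p (refl (lam f)) → subst C p (d g) = d f := by
    rintro g rfl p hp
    rw [eq_of_heq hp, hsubst]
  exact key _ (funext (hbeta f)) (η (lam f)) (hη f)
end

section
/- For the nonstandard dependent product Π'(A,B) := Π(A,B) + Π(A,B) with λ'(f) := inl (λ f) and app'(m,a) defined by case analysis, the propositional η-rule fails: assuming a term η' : ∀ m : Π'(A,B), Id m (λ' (fun x => app' m x)), one can derive, for any f : ∀ x : A, B x, a proof of Id (inr (λ f)) (inl (λ f)), and hence (by disjointness of coproduct injections) an element of the empty type. -/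
/-- For the nonstandard dependent product Π'(A,B) := Π(A,B) + Π(A,B)
with λ'(f) := inl (lam f) and case-based application app', the propositional η-rule
fails: from η' : ∀ m, Id m (λ'(fun x => app' m x)) one derives, for any f, a proof of
Id (inr (lam f)) (inl (lam f)) and hence (by disjointness of injections) an element
of the empty type. -/
theorem nonstandard_pi_no_eta
    (A : Type) (B : A → Type) (Pi : Type)
    (lam : (∀ x : A, B x) → Pi)
    (app : Pi → ∀ a : A, B a)
    (hbeta : ∀ (f : ∀ x : A, B x) (a : A), app (lam f) a = f a)
    (Id : ∀ {X : Type}, X → X → Type)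
    (refl : ∀ {X : Type} (a : X), Id a a)
    (subst : ∀ {X : Type} (P : X → Type) {a b : X}, Id a b → P b → P a)
    (hsubst : ∀ {X : Type} (P : X → Type) (a : X) (b : P a), subst P (refl a) b = b)
    (disj : ∀ c : Pi, Id (Sum.inr c : Pi ⊕ Pi) (Sum.inl c) → Empty)
    (η' : ∀ m : Pi ⊕ Pi,
      Id m (Sum.inl (lam (fun x => Sum.elim (fun u => app u x) (fun u => app u x) m)) : Pi ⊕ Pi)) :
    ∀ f : ∀ x : A, B x,
      Nonempty ((Id (Sum.inr (lam f) : Pi ⊕ Pi) (Sum.inl (lam f))) × Empty) := by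
  intro f
  have h := η' (Sum.inr (lam f))
  simp only [Sum.elim_inr] at h
  have hf : (fun x => app (lam f) x) = f := funext (hbeta f)
  rw [hf] at h
  exact ⟨h, disj _ h⟩
end

section
/- Function extensionality with its computation rule implies the propositional η-rule: given ext : ∀ (m n : ΠAB), (Π x : A, Id (app m x) (app n x)) → Id m n satisfying ext (lam f) (lam f) (lam (fun x => refl (f x))) = refl (lam f), one can define η : ∀ m, Id m (lam (fun x => app m x)) with η (lam f) = refl (lam f). -/
/-- Function extensionality with its computation rule implies the
propositional η-rule with its computation rule (the latter stated via `HEq`,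
the two sides having types equal only up to the β-rule). -/
theorem ext_implies_prop_eta
    (Pi : ∀ (A : Type), (A → Type) → Type)
    (lam : ∀ {A : Type} {B : A → Type}, (∀ x : A, B x) → Pi A B)
    (app : ∀ {A : Type} {B : A → Type}, Pi A B → ∀ a : A, B a)
    (hbeta : ∀ {A : Type} {B : A → Type} (f : ∀ x : A, B x) (a : A), app (lam f) a = f a)
    (Id : ∀ {X : Type}, X → X → Type)
    (refl : ∀ {X : Type} (a : X), Id a a)
    (A : Type) (B : A → Type)
    (ext : ∀ m n : Pi A B, Pi A (fun x => Id (app m x) (app n x)) → Id m n)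
    (hext : ∀ f : ∀ x : A, B x,
      ext (lam f) (lam f) (lam (fun x => refl (app (lam f) x))) = refl (lam f)) :
    ∃ η : ∀ m : Pi A B, Id m (lam (fun x => app m x)),
      ∀ f : ∀ x : A, B x, HEq (η (lam f)) (refl (lam f)) := by
  refine ⟨fun m => ext m (lam (fun x => app m x))
      (cast (congrArg (Pi A)
        (funext (fun x => congrArg (Id (app m x)) (hbeta (fun y => app m y) x).symm)))
        (lam (fun x => refl (app m x)))), fun f => ?_⟩
  have aux : ∀ (g : ∀ x : A, B x) (_ : f = g)
      (p : Pi A (fun x => Id (app (lam f) x) (app (lam g) x))),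
      HEq p (lam (fun x => refl (app (lam f) x))) →
      HEq (ext (lam f) (lam g) p) (refl (lam f)) := by
    intro g hg
    subst hg
    intro p hp
    rw [eq_of_heq hp, hext]
  exact aux _ (funext (fun x => (hbeta f x).symm)) _ (cast_heq _ _)
end

section
/- Function extensionality with its computation rule implies the propositional ξ-rule: given ext as above, for f, g : ∀ x : A, B x and p : ∀ x, Id (f x) (g x), one can define ξ(f,g,p) : Id (lam f) (lam g) satisfying ξ(f,f, fun x => refl (f x)) = refl (lam f). -/
/-- Function extensionality with its computation rule implies the
propositional ξ-rule with its computation rule. -/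
theorem ext_implies_prop_xi
    (Pi : ∀ (A : Type), (A → Type) → Type)
    (lam : ∀ {A : Type} {B : A → Type}, (∀ x : A, B x) → Pi A B)
    (app : ∀ {A : Type} {B : A → Type}, Pi A B → ∀ a : A, B a)
    (hbeta : ∀ {A : Type} {B : A → Type} (f : ∀ x : A, B x) (a : A), app (lam f) a = f a)
    (Id : ∀ {X : Type}, X → X → Type)
    (refl : ∀ {X : Type} (a : X), Id a a)
    (A : Type) (B : A → Type)
    (ext : ∀ m n : Pi A B, Pi A (fun x => Id (app m x) (app n x)) → Id m n)
    (hext : ∀ f : ∀ x : A, B x,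
      ext (lam f) (lam f) (lam (fun x => refl (app (lam f) x))) = refl (lam f)) :
    ∃ ξ : ∀ (f g : ∀ x : A, B x), (∀ x : A, Id (f x) (g x)) → Id (lam f) (lam g),
      ∀ f : ∀ x : A, B x, ξ f f (fun x => refl (f x)) = refl (lam f) := by
  have key : ∀ {X : Type} (a b : X) (_ : b = a) (h : Id b b = Id a a),
      cast h (refl b) = refl a := by
    intro X a b e h; subst e; simp
  refine ⟨fun f g p => ext (lam f) (lam g)
      (lam fun x => cast (by rw [hbeta, hbeta]) (p x)), fun f => ?_⟩
  rw [← hext f]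
  exact congrArg (ext (lam f) (lam f)) (congrArg lam (funext fun x =>
    key (app (lam f) x) (f x) (hbeta f x).symm _))
end

section
/- The propositional η-rule together with the propositional ξ-rule implies function extensionality: given η : ∀ m, Id m (lam (fun x => app m x)) with η(lam f) = refl, and ξ : ∀ f g p, Id (lam f) (lam g) with ξ(f,f,refl∘f) = refl, one can define ext(m,n,k) : Id m n for m, n : ΠAB and k : Π x : A, Id (app m x) (app n x), satisfying ext(lam h, lam h, lam (refl ∘ h)) = refl (lam h). -/

theorem eta_xi_aux {Y : Type} (Id : Y → Y → Type) (refl : ∀ a : Y, Id a a)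
    (comp : ∀ {a b c : Y}, Id a b → Id b c → Id a c)
    (hcomp : ∀ {a b : Y} (p : Id a b), comp (refl a) p = p)
    (symm : ∀ {a b : Y}, Id a b → Id b a)
    (hsymm : ∀ a : Y, symm (refl a) = refl a)
    {a b : Y} (e : b = a) (p : Id a b) (hp : HEq p (refl a)) :
    comp (comp p (refl b)) (symm p) = refl a := by
  subst e
  rw [eq_of_heq hp, hcomp, hsymm, hcomp]

/-- The propositional η-rule together with the propositional ξ-rule
implies function extensionality with its computation rule.  Here `comp p q`
denotes the composition q ∘ p (p : Id a b first, q : Id b c second), with unit law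
p ∘ refl = p, and `symm` is the inverse with symm (refl a) = refl a. -/
theorem eta_xi_imply_ext
    (Pi : ∀ (A : Type), (A → Type) → Type)
    (lam : ∀ {A : Type} {B : A → Type}, (∀ x : A, B x) → Pi A B)
    (app : ∀ {A : Type} {B : A → Type}, Pi A B → ∀ a : A, B a)
    (hbeta : ∀ {A : Type} {B : A → Type} (f : ∀ x : A, B x) (a : A), app (lam f) a = f a)
    (Id : ∀ {X : Type}, X → X → Type)
    (refl : ∀ {X : Type} (a : X), Id a a)
    (comp : ∀ {X : Type} {a b c : X}, Id a b → Id b c → Id a c)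
    (hcomp : ∀ {X : Type} {a b : X} (p : Id a b), comp (refl a) p = p)
    (symm : ∀ {X : Type} {a b : X}, Id a b → Id b a)
    (hsymm : ∀ {X : Type} (a : X), symm (refl a) = refl a)
    (A : Type) (B : A → Type)
    (η : ∀ m : Pi A B, Id m (lam (fun x => app m x)))
    (hη : ∀ f : ∀ x : A, B x, HEq (η (lam f)) (refl (lam f)))
    (ξ : ∀ (f g : ∀ x : A, B x), (∀ x : A, Id (f x) (g x)) → Id (lam f) (lam g))
    (hξ : ∀ f : ∀ x : A, B x, ξ f f (fun x => refl (f x)) = refl (lam f)) :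
    ∃ ext : ∀ m n : Pi A B, Pi A (fun x => Id (app m x) (app n x)) → Id m n,
      ∀ h : ∀ x : A, B x,
        ext (lam h) (lam h) (lam (fun x => refl (app (lam h) x))) = refl (lam h) := by
  refine ⟨fun m n k => comp (comp (η m) (ξ _ _ (fun x => app k x))) (symm (η n)), ?_⟩
  intro h
  have e2 : (fun x => app (lam (fun x => refl (app (lam h) x))) x)
      = (fun x => refl (app (lam h) x)) := funext fun x => hbeta _ x
  beta_reduce
  rw [e2, hξ (fun x => app (lam h) x)]
  exact eta_xi_aux Id refl comp hcomp symm hsymm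
    (congrArg lam (funext fun x => hbeta h x)) (η (lam h)) (hη h)
end

section
/- The strong Π-Id-elimination rule implies function extensionality: given L : ∀ {C : ∀ (u v : ΠAB), (Π x : A, Id (app u x) (app v x)) → Type}, (∀ f : ∀ x, B x, C (lam f) (lam f) (lam (refl ∘ f))) → ∀ m n k, C m n k, satisfying L d (lam h) (lam h) (lam (refl ∘ h)) = d h, one can define ext(m,n,k) : Id m n with ext(lam f, lam f, lam (refl ∘ f)) = refl (lam f). -/
/-- The strong Π-Id-elimination rule implies function extensionality
with its computation rule. -/
theorem pi_id_elim_implies_ext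
    (Pi : ∀ (A : Type), (A → Type) → Type)
    (lam : ∀ {A : Type} {B : A → Type}, (∀ x : A, B x) → Pi A B)
    (app : ∀ {A : Type} {B : A → Type}, Pi A B → ∀ a : A, B a)
    (hbeta : ∀ {A : Type} {B : A → Type} (f : ∀ x : A, B x) (a : A), app (lam f) a = f a)
    (Id : ∀ {X : Type}, X → X → Type)
    (refl : ∀ {X : Type} (a : X), Id a a)
    (A : Type) (B : A → Type)
    (L : ∀ (C : ∀ u v : Pi A B, Pi A (fun x => Id (app u x) (app v x)) → Type),
      (∀ f : ∀ x : A, B x, C (lam f) (lam f) (lam (fun x => refl (app (lam f) x)))) →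
      ∀ (m n : Pi A B) (k : Pi A (fun x => Id (app m x) (app n x))), C m n k)
    (hL : ∀ (C : ∀ u v : Pi A B, Pi A (fun x => Id (app u x) (app v x)) → Type)
      (d : ∀ f : ∀ x : A, B x, C (lam f) (lam f) (lam (fun x => refl (app (lam f) x))))
      (h : ∀ x : A, B x),
      L C d (lam h) (lam h) (lam (fun x => refl (app (lam h) x))) = d h) :
    ∃ ext : ∀ m n : Pi A B, Pi A (fun x => Id (app m x) (app n x)) → Id m n,
      ∀ f : ∀ x : A, B x,
        ext (lam f) (lam f) (lam (fun x => refl (app (lam f) x))) = refl (lam f) := by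
  exact ⟨L (fun u v _ => Id u v) (fun f => refl (lam f)),
    fun f => hL (fun u v _ => Id u v) (fun f => refl (lam f)) f⟩
end

section
/- The Π-Id-elimination rule implies the coherence rule Π-ext-app: for m, n : ΠAB, k : Π x : A, Id (app m x) (app n x), and a : A, there is μ(m,n,k,a) : Id (ext(m,n,k) ∗ a) (app k a), satisfying μ(lam f, lam f, lam (refl ∘ f), a) = refl (refl (f a)). -/
/-- The Π-Id-elimination rule implies the coherence rule Π-ext-app:
μ(m,n,k,a) : Id (ext(m,n,k) ∗ a) (app k a), with the computation rule
μ(lam f, lam f, lam (refl ∘ f), a) = refl (refl (f a)) (stated via `HEq`, the two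
sides having types equal only up to the β-rule). -/
theorem pi_id_elim_implies_ext_app
    (Pi : ∀ (A : Type), (A → Type) → Type)
    (lam : ∀ {A : Type} {B : A → Type}, (∀ x : A, B x) → Pi A B)
    (app : ∀ {A : Type} {B : A → Type}, Pi A B → ∀ a : A, B a)
    (hbeta : ∀ {A : Type} {B : A → Type} (f : ∀ x : A, B x) (a : A), app (lam f) a = f a)
    (Id : ∀ {X : Type}, X → X → Type)
    (refl : ∀ {X : Type} (a : X), Id a a)
    (A : Type) (B : A → Type)
    (star : ∀ (m n : Pi A B), Id m n → ∀ a : A, Id (app m a) (app n a))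
    (hstar : ∀ (m : Pi A B) (a : A), star m m (refl m) a = refl (app m a))
    (L : ∀ (C : ∀ u v : Pi A B, Pi A (fun x => Id (app u x) (app v x)) → Type),
      (∀ f : ∀ x : A, B x, C (lam f) (lam f) (lam (fun x => refl (app (lam f) x)))) →
      ∀ (m n : Pi A B) (k : Pi A (fun x => Id (app m x) (app n x))), C m n k)
    (hL : ∀ (C : ∀ u v : Pi A B, Pi A (fun x => Id (app u x) (app v x)) → Type)
      (d : ∀ f : ∀ x : A, B x, C (lam f) (lam f) (lam (fun x => refl (app (lam f) x))))
      (h : ∀ x : A, B x),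
      L C d (lam h) (lam h) (lam (fun x => refl (app (lam h) x))) = d h)
    (ext : ∀ m n : Pi A B, Pi A (fun x => Id (app m x) (app n x)) → Id m n)
    (hext : ∀ f : ∀ x : A, B x,
      ext (lam f) (lam f) (lam (fun x => refl (app (lam f) x))) = refl (lam f)) :
    ∃ μ : ∀ (m n : Pi A B) (k : Pi A (fun x => Id (app m x) (app n x))) (a : A),
        Id (star m n (ext m n k) a) (app k a),
      ∀ (f : ∀ x : A, B x) (a : A),
        HEq (μ (lam f) (lam f) (lam (fun x => refl (app (lam f) x))) a)
            (refl (refl (f a))) := by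
  refine ⟨L (fun m n k => ∀ a : A, Id (star m n (ext m n k) a) (app k a))
    (fun f a => cast (by rw [hext, hstar, hbeta (fun x => refl (app (lam f) x)) a]) (refl (refl (app (lam f) a)))) , ?_⟩
  intro f a
  rw [hL]
  refine HEq.trans (cast_heq _ _) ?_
  rw [hbeta f a]
end

section
/- The Π-Id-elimination rule implies coherence of extensionality with composition: for ℓ, m, n : ΠAB and pointwise equalities f : ∀ x, Id (app ℓ x) (app m x) and g : ∀ x, Id (app m x) (app n x), there is a term ν(f,g) : Id (ext(m,n,lam g) ∘ ext(ℓ,m,lam f)) (ext(ℓ,n, lam (fun x => g x ∘ f x))), where ∘ denotes the composition of identity proofs. -/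
/-- The Π-Id-elimination rule implies coherence of extensionality with
composition: ν(f,g) : Id (ext(m,n,lam g) ∘ ext(ℓ,m,lam f)) (ext(ℓ,n,lam (g∘f))).
Here `comp p q` denotes q ∘ p. -/
theorem pi_id_elim_implies_ext_comp_coherence
    (Pi : ∀ (A : Type), (A → Type) → Type)
    (lam : ∀ {A : Type} {B : A → Type}, (∀ x : A, B x) → Pi A B)
    (app : ∀ {A : Type} {B : A → Type}, Pi A B → ∀ a : A, B a)
    (hbeta : ∀ {A : Type} {B : A → Type} (f : ∀ x : A, B x) (a : A), app (lam f) a = f a)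
    (Id : ∀ {X : Type}, X → X → Type)
    (refl : ∀ {X : Type} (a : X), Id a a)
    (comp : ∀ {X : Type} {a b c : X}, Id a b → Id b c → Id a c)
    (hcompl : ∀ {X : Type} {a b : X} (p : Id a b), comp (refl a) p = p)
    (hcompr : ∀ {X : Type} {a b : X} (p : Id a b), comp p (refl b) = p)
    (A : Type) (B : A → Type)
    (L : ∀ (C : ∀ u v : Pi A B, Pi A (fun x => Id (app u x) (app v x)) → Type),
      (∀ f : ∀ x : A, B x, C (lam f) (lam f) (lam (fun x => refl (app (lam f) x)))) →
      ∀ (m n : Pi A B) (k : Pi A (fun x => Id (app m x) (app n x))), C m n k)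
    (hL : ∀ (C : ∀ u v : Pi A B, Pi A (fun x => Id (app u x) (app v x)) → Type)
      (d : ∀ f : ∀ x : A, B x, C (lam f) (lam f) (lam (fun x => refl (app (lam f) x))))
      (h : ∀ x : A, B x),
      L C d (lam h) (lam h) (lam (fun x => refl (app (lam h) x))) = d h)
    (ext : ∀ m n : Pi A B, Pi A (fun x => Id (app m x) (app n x)) → Id m n)
    (hext : ∀ f : ∀ x : A, B x,
      ext (lam f) (lam f) (lam (fun x => refl (app (lam f) x))) = refl (lam f))
    (extCong : ∀ (a b : Pi A B) (c d : Pi A (fun x => Id (app a x) (app b x))),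
      Id c d → Id (ext a b c) (ext a b d))
    (η : ∀ m : Pi A B, Id m (lam (fun x => app m x)))
    (hη : ∀ f : ∀ x : A, B x, HEq (η (lam f)) (refl (lam f))) :
    Nonempty (∀ (ℓ m n : Pi A B)
      (f : ∀ x : A, Id (app ℓ x) (app m x)) (g : ∀ x : A, Id (app m x) (app n x)),
      Id (comp (ext ℓ m (lam f)) (ext m n (lam g)))
         (ext ℓ n (lam (fun x => comp (f x) (g x))))) := by
  constructor
  have main := L (fun u v k => ∀ (p : Pi A B) (g : ∀ x : A, Id (app v x) (app p x)),
      Id (comp (ext u v k) (ext v p (lam g))) (ext u p (lam (fun x => comp (app k x) (g x)))))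
    (fun h p g => by
      have e1 : (fun x => comp (app (lam (fun x => refl (app (lam h) x))) x) (g x)) = g := by
        funext x
        rw [hbeta (fun x => refl (app (lam h) x)) x, hcompl]
      rw [e1, hext, hcompl]
      exact refl _)
  intro ℓ m n f g
  have := main ℓ m (lam f) n g
  have e2 : (fun x => comp (app (lam f) x) (g x)) = (fun x => comp (f x) (g x)) := by
    funext x; rw [hbeta f x]
  rwa [e2] at this
end

section
/- In a consistent model where types are interpreted as sets (Lean types), dependent products as Pi-types, identity types as equality, and the empty type as Empty, the disjointness rule holds: for any type C and c : C there is no proof of Sum.inr c = Sum.inl c in C ⊕ C; consequently the Π'-construction (sum of two copies of a function type) cannot satisfy the propositional η-rule, i.e. there is no function η' : ∀ (m : (A → B) ⊕ (A → B)), m = Sum.inl (fun x => Sum.elim (· x) (· x) m) for nonempty A, B with a chosen function f : A → B. -/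
/-- In the set-theoretic (Lean) model, the disjointness rule holds:
Sum.inr c ≠ Sum.inl c; consequently the nonstandard Π'-construction
(A → B) ⊕ (A → B) with app' m := Sum.elim (· x) (· x) m cannot satisfy the
propositional η-rule. -/
theorem set_model_refutes_nonstandard_eta
    (A B : Type) [Nonempty A] [Nonempty B] (f : A → B) :
    (∀ (C : Type) (c : C), (Sum.inr c : C ⊕ C) ≠ Sum.inl c) ∧
    ((∀ m : (A → B) ⊕ (A → B),
        m = Sum.inl (fun x => Sum.elim (fun u => u x) (fun u => u x) m)) → False) := by
  constructor
  · intro C c h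
    cases h
  · intro h
    have := h (Sum.inr f)
    simp at this
end
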